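/- Let V and W be compact subsets of ℝ² that are closures of bounded simply connected open sets, with W convex. Let F = (u, v) : V → ℝ² with u, v continuous on V and harmonic on the interior of V, F(V) ⊆ W, and suppose the restriction of F to ∂V is a homeomorphism from ∂V onto ∂W. For α ∈ [0, π), let f_α := cos(α)·u + sin(α)·v on V. Then for every α ∈ [0, π), the set Max_{f_α} := { x ∈ ∂V : f_α(x) ≥ f_α(y) for all y in some neighborhood of x in V } is nonempty and connected, and the set Min_{f_α} := { x ∈ ∂V : f_α(x) ≤ f_α(y) for all y in some neighborhood of x in V } is nonempty and connected. -/

import Mathlib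

open Set Filter Topology

/-- The Laplacian `∂²u/∂x² + ∂²u/∂y²` of a function `u : ℝ² → ℝ` at a point `p`. -/
noncomputable def lap2 (u : ℝ × ℝ → ℝ) (p : ℝ × ℝ) : ℝ :=
  fderiv ℝ (fun q => fderiv ℝ u q (1, 0)) p (1, 0) +
  fderiv ℝ (fun q => fderiv ℝ u q (0, 1)) p (0, 1)

/-- `u` is harmonic on `Ω ⊆ ℝ²`: twice continuously differentiable with vanishing Laplacian. -/
def HarmonicOn2 (u : ℝ × ℝ → ℝ) (Ω : Set (ℝ × ℝ)) : Prop :=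
  ContDiffOn ℝ 2 u Ω ∧ ∀ p ∈ Ω, lap2 u p = 0

/-- `V` is the closure of a bounded, nonempty, simply connected open subset of `ℝ²`. -/
def IsClosureOfSCRegion (V : Set (ℝ × ℝ)) : Prop :=
  ∃ Ω : Set (ℝ × ℝ), IsOpen Ω ∧ Bornology.IsBounded Ω ∧ Ω.Nonempty ∧
    SimplyConnectedSpace Ω ∧ V = closure Ω

/-!
Let `f = ℓ ∘ F` with `ℓ = cos α · x + sin α · y`, and let `m ≤ M` be the extreme values of `ℓ` on
`W`. By the weak maximum principle `m ≤ f ≤ M` on `V`. A boundary point `x` with `m < f x < M` is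
not a local maximum: `F x` is a boundary point of the convex set `W` lying strictly between its
supporting lines `ℓ = m` and `ℓ = M`, so it is a limit of points of `∂W` where `ℓ` is larger,
and these pull back under the boundary homeomorphism to points of `∂V` near `x`. A local maximum
with `f x = m` makes `f` constant near `x`, hence on all of `V` because harmonic functions are
real analytic; this contradicts `m < M`. So the local maxima form the preimage in `∂V` of the
convex face `{ℓ = M} ∩ W ⊆ ∂W`, which is connected. Minima are the maxima of `-ℓ`.
-/

section Topology

theorem IsPreconnected.inter_frontier_nonempty {X : Type*} [TopologicalSpace X] {s t : Set X}
    (hs : IsPreconnected s) (hst : (s ∩ t).Nonempty) (hst' : (s \ t).Nonempty) :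
    (s ∩ frontier t).Nonempty := by
  by_contra h
  have hcover : s ⊆ interior t ∪ (closure t)ᶜ := fun x hx => by
    by_contra hx'
    simp only [mem_union, mem_compl_iff, not_or, not_not] at hx'
    exact h ⟨x, hx, hx'.2, hx'.1⟩
  obtain ⟨x, -, hxi, hxc⟩ := hs _ _ isOpen_interior isClosed_closure.isOpen_compl hcover
    (by
      obtain ⟨x, hxs, hxt⟩ := hst
      exact ⟨x, hxs, (hcover hxs).resolve_right (not_not.2 (subset_closure hxt))⟩)
    (by
      obtain ⟨x, hxs, hxt⟩ := hst'
      exact ⟨x, hxs, (hcover hxs).resolve_left fun hxi => hxt (interior_subset hxi)⟩)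
  exact hxc (subset_closure (interior_subset hxi))

variable {X Y : Type*} [TopologicalSpace X] [TopologicalSpace Y] [T2Space Y] {K : Set X}
  {F : X → Y} {T : Set Y}

theorem IsCompact.isClosedEmbedding_domRestrict (hK : IsCompact K) (hF : ContinuousOn F K)
    (hinj : InjOn F K) : IsClosedEmbedding (K.domRestrict F) :=
  have := isCompact_iff_compactSpace.1 hK
  hF.domRestrict.isClosedEmbedding hinj.injective

theorem IsCompact.mem_closure_inter_preimage (hK : IsCompact K) (hF : ContinuousOn F K)
    (hinj : InjOn F K) (hT : T ⊆ F '' K) {x : X} (hx : x ∈ K) (hFx : F x ∈ closure T) :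
    x ∈ closure (K ∩ F ⁻¹' T) := by
  have hemb := hK.isClosedEmbedding_domRestrict hF hinj
  have : (⟨x, hx⟩ : K) ∈ closure (K.domRestrict F ⁻¹' T) := by
    rwa [hemb.isInducing.closure_eq_preimage_closure_image,
      image_preimage_eq_of_subset (by rwa [range_domRestrict])]
  simpa [domRestrict_eq, preimage_comp, Subtype.image_preimage_coe] using
    mem_closure_image continuous_subtype_val.continuousAt this

theorem IsCompact.isPreconnected_inter_preimage (hK : IsCompact K) (hF : ContinuousOn F K)
    (hinj : InjOn F K) (hT : IsPreconnected T) (hTK : T ⊆ F '' K) :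
    IsPreconnected (K ∩ F ⁻¹' T) := by
  have hemb := hK.isClosedEmbedding_domRestrict hF hinj
  simpa [domRestrict_eq, preimage_comp, Subtype.image_preimage_coe] using
    (hT.preimage_of_isClosedMap hemb.injective hemb.isClosedMap
      (by rwa [range_domRestrict])).image _ continuous_subtype_val.continuousOn

end Topology

section SecondDerivative

variable {E : Type*} [NormedAddCommGroup E] [NormedSpace ℝ E] {f : E → ℝ} {p : E}

theorem fderiv_fderiv_apply_eq_iteratedFDeriv (hf : ContDiffAt ℝ 2 f p) (e e' : E) :
    fderiv ℝ (fun q => fderiv ℝ f q e) p e' = iteratedFDeriv ℝ 2 f p ![e', e] := by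
  have hdf : DifferentiableAt ℝ (fderiv ℝ f) p :=
    (hf.fderiv_right (m := 1) (by norm_num)).differentiableAt one_ne_zero
  rw [iteratedFDeriv_two_apply, fderiv_clm_apply hdf (differentiableAt_const e)]
  simp

theorem IsLocalMax.iteratedFDeriv_two_nonpos (hmax : IsLocalMax f p) (hf : ContDiffAt ℝ 2 f p)
    (e : E) : iteratedFDeriv ℝ 2 f p ![e, e] ≤ 0 := by
  set γ : ℝ → E := fun t => p + t • e
  have hγ0 : γ 0 = p := by simp [γ]
  have hγ : ∀ t, HasDerivAt γ e t := fun t => by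
    simpa [γ] using ((hasDerivAt_id t).smul_const e).const_add p
  have hγp : Tendsto γ (𝓝 0) (𝓝 p) := hγ0 ▸ (hγ 0).continuousAt.tendsto
  set φ := f ∘ γ
  have hderiv : deriv φ =ᶠ[𝓝 0] fun t => fderiv ℝ f (γ t) e := by
    have : ∀ᶠ q in 𝓝 p, DifferentiableAt ℝ f q :=
      (hf.eventually (by simp)).mono fun q hq => hq.differentiableAt two_ne_zero
    filter_upwards [hγp.eventually this] with t ht
    exact (ht.hasFDerivAt.comp_hasDerivAt t (hγ t)).deriv
  have hD : deriv (deriv φ) 0 = iteratedFDeriv ℝ 2 f p ![e, e] := by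
    have hdf : DifferentiableAt ℝ (fun q => fderiv ℝ f q e) (γ 0) := hγ0 ▸
      ((hf.fderiv_right (m := 1) (by norm_num)).differentiableAt one_ne_zero).clm_apply
        (differentiableAt_const e)
    rw [hderiv.deriv_eq, ← fderiv_fderiv_apply_eq_iteratedFDeriv hf, ← hγ0]
    exact (hdf.hasFDerivAt.comp_hasDerivAt (0 : ℝ) (hγ 0)).deriv
  have hφcont : ContinuousAt φ 0 := (hγ0 ▸ hf.continuousAt).comp (hγ 0).continuousAt
  have hφmax : IsLocalMax φ 0 := (hγ0 ▸ hmax).comp_continuous (hγ 0).continuousAt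
  by_contra! hpos
  -- a maximum that passes the second-derivative test for a minimum is locally constant
  have hφmin : IsLocalMin φ 0 :=
    isLocalMin_of_deriv_deriv_pos (hD ▸ hpos) hφmax.deriv_eq_zero hφcont
  have hconst : φ =ᶠ[𝓝 0] fun _ => φ 0 := by
    filter_upwards [hφmax, hφmin] with t h₁ h₂ using le_antisymm h₁ h₂
  have : deriv (deriv φ) 0 = 0 := by
    rw [hconst.deriv.deriv_eq]
    simp
  linarith

end SecondDerivative

section Laplacian

variable {f g : ℝ × ℝ → ℝ} {p : ℝ × ℝ} {U : Set (ℝ × ℝ)}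

theorem lap2_eq_iteratedFDeriv (hf : ContDiffAt ℝ 2 f p) :
    lap2 f p = iteratedFDeriv ℝ 2 f p ![(1, 0), (1, 0)] +
      iteratedFDeriv ℝ 2 f p ![(0, 1), (0, 1)] := by
  simp only [lap2, fderiv_fderiv_apply_eq_iteratedFDeriv hf]

theorem lap2_add (hf : ContDiffAt ℝ 2 f p) (hg : ContDiffAt ℝ 2 g p) :
    lap2 (fun q => f q + g q) p = lap2 f p + lap2 g p := by
  rw [lap2_eq_iteratedFDeriv (hf.add hg), lap2_eq_iteratedFDeriv hf, lap2_eq_iteratedFDeriv hg,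
    fun_iteratedFDeriv_add_apply hf hg]
  simp only [add_apply]
  ring

theorem lap2_const_mul (c : ℝ) (hf : ContDiffAt ℝ 2 f p) :
    lap2 (fun q => c * f q) p = c * lap2 f p := by
  rw [show (fun q => c * f q) = fun q => c • f q from rfl,
    lap2_eq_iteratedFDeriv (hf.const_smul c), lap2_eq_iteratedFDeriv hf,
    iteratedFDeriv_const_smul_apply' hf]
  simp only [smul_apply, smul_eq_mul]
  ring

theorem lap2_const_mul_fst_sq (ε : ℝ) (p : ℝ × ℝ) :
    lap2 (fun q => ε * q.1 ^ 2) p = 2 * ε := by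
  have hD : ∀ e : ℝ × ℝ, (fun q : ℝ × ℝ => fderiv ℝ (fun q => ε * q.1 ^ 2) q e) =
      fun q => 2 * ε * e.1 * q.1 := by
    intro e
    funext q
    rw [(((hasFDerivAt_fst (p := q)).pow 2).const_mul ε).fderiv]
    simp only [Nat.add_one_sub_one, pow_one, nsmul_eq_mul, Nat.cast_ofNat, smul_apply,
      ContinuousLinearMap.coe_fst', smul_eq_mul]
    ring
  simp only [lap2, hD]
  rw [((hasFDerivAt_fst (p := p)).const_mul _).fderiv,
    ((hasFDerivAt_fst (p := p)).const_mul _).fderiv]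
  simp

theorem IsLocalMax.lap2_nonpos (hmax : IsLocalMax f p) (hf : ContDiffAt ℝ 2 f p) :
    lap2 f p ≤ 0 := by
  rw [lap2_eq_iteratedFDeriv hf]
  linarith [hmax.iteratedFDeriv_two_nonpos hf (1, 0), hmax.iteratedFDeriv_two_nonpos hf (0, 1)]

namespace HarmonicOn2

theorem contDiffAt (hf : HarmonicOn2 f U) (hU : IsOpen U) (hp : p ∈ U) : ContDiffAt ℝ 2 f p :=
  hf.1.contDiffAt (hU.mem_nhds hp)

theorem add (hf : HarmonicOn2 f U) (hg : HarmonicOn2 g U) (hU : IsOpen U) :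
    HarmonicOn2 (fun q => f q + g q) U :=
  ⟨hf.1.add hg.1, fun p hp => by
    rw [lap2_add (hf.contDiffAt hU hp) (hg.contDiffAt hU hp), hf.2 p hp, hg.2 p hp, add_zero]⟩

theorem const_mul (hf : HarmonicOn2 f U) (hU : IsOpen U) (c : ℝ) :
    HarmonicOn2 (fun q => c * f q) U :=
  ⟨contDiffOn_const.mul hf.1, fun p hp => by
    rw [lap2_const_mul c (hf.contDiffAt hU hp), hf.2 p hp, mul_zero]⟩

theorem clm_comp_prodMk (hf : HarmonicOn2 f U) (hg : HarmonicOn2 g U) (hU : IsOpen U)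
    (ℓ : ℝ × ℝ →L[ℝ] ℝ) : HarmonicOn2 (fun q => ℓ (f q, g q)) U := by
  have hℓ : (fun q => ℓ (f q, g q)) = fun q => ℓ (1, 0) * f q + ℓ (0, 1) * g q := by
    funext q
    have : (f q, g q) = f q • ((1, 0) : ℝ × ℝ) + g q • (0, 1) := by simp
    rw [this, map_add, map_smul, map_smul]
    simp [mul_comm]
  rw [hℓ]
  exact (hf.const_mul hU _).add (hg.const_mul hU _) hU

theorem le_of_forall_frontier_le {V : Set (ℝ × ℝ)} (hf : HarmonicOn2 f (interior V))
    (hV : IsCompact V) (hc : ContinuousOn f V) {B : ℝ} (hB : ∀ y ∈ frontier V, f y ≤ B)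
    {z : ℝ × ℝ} (hz : z ∈ V) : f z ≤ B := by
  obtain ⟨r, -, hr⟩ := hV.exists_isMaxOn ⟨z, hz⟩
    (by fun_prop : ContinuousOn (fun q : ℝ × ℝ => q.1 ^ 2) V)
  -- `f + ε x²` has positive Laplacian, so it cannot have an interior maximum
  have hε : ∀ ε > 0, f z ≤ B + ε * r.1 ^ 2 := by
    intro ε hε
    set g : ℝ × ℝ → ℝ := fun q => f q + ε * q.1 ^ 2
    have hsq (q : ℝ × ℝ) : ContDiffAt ℝ 2 (fun q : ℝ × ℝ => ε * q.1 ^ 2) q := by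
      fun_prop
    obtain ⟨p, hpV, hp⟩ : ∃ p ∈ V, IsMaxOn g V p :=
      hV.exists_isMaxOn ⟨z, hz⟩ (hc.add (by fun_prop))
    have hpfr : p ∈ frontier V := by
      refine ⟨subset_closure hpV, fun hpi => ?_⟩
      have hfp := hf.contDiffAt isOpen_interior hpi
      have := (hp.isLocalMax (mem_interior_iff_mem_nhds.1 hpi)).lap2_nonpos (hfp.add (hsq p))
      rw [lap2_add hfp (hsq p), hf.2 p hpi, lap2_const_mul_fst_sq] at this
      linarith
    calc f z ≤ g z := le_add_of_nonneg_right (by positivity)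
      _ ≤ g p := hp hz
      _ ≤ B + ε * r.1 ^ 2 := add_le_add (hB p hpfr) (mul_le_mul_of_nonneg_left (hr hpV) hε.le)
  have hlim : Tendsto (fun ε : ℝ => B + ε * r.1 ^ 2) (𝓝[>] 0) (𝓝 B) := by
    have hcont : Continuous fun ε : ℝ => B + ε * r.1 ^ 2 := by fun_prop
    simpa using (hcont.tendsto 0).mono_left nhdsWithin_le_nhds
  exact ge_of_tendsto hlim (eventually_nhdsWithin_of_forall hε)

theorem mapsTo_Icc_of_mapsTo_frontier {V : Set (ℝ × ℝ)} (hf : HarmonicOn2 f (interior V))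
    (hV : IsCompact V) (hc : ContinuousOn f V) {m M : ℝ}
    (hfr : MapsTo f (frontier V) (Icc m M)) : MapsTo f V (Icc m M) := fun z hz => by
  have hneg := (hf.const_mul isOpen_interior (-1)).le_of_forall_frontier_le hV
    (continuousOn_const.mul hc) (B := -m) (fun y hy => by linarith [(hfr hy).1]) hz
  exact ⟨by linarith, hf.le_of_forall_frontier_le hV hc (fun y hy => (hfr hy).2) hz⟩

theorem analyticOnNhd (hf : HarmonicOn2 f U) (hU : IsOpen U) : AnalyticOnNhd ℝ f U := by
  intro p hp
  -- transport to `ℂ`, where harmonic functions are known to be real analytic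
  set e := Complex.equivRealProdCLM
  have hharm : InnerProductSpace.HarmonicAt (f ∘ e) (e.symm p) := by
    refine ⟨e.contDiffAt_comp_iff.2 (hf.contDiffAt hU hp), ?_⟩
    have hev : ∀ᶠ z in 𝓝 (e.symm p), e z ∈ U :=
      e.continuous.continuousAt.preimage_mem_nhds (by simpa using hU.mem_nhds hp)
    filter_upwards [hev] with z hz
    have hcomp : iteratedFDeriv ℝ 2 (f ∘ e) z =
        (iteratedFDeriv ℝ 2 f (e z)).compContinuousLinearMap fun _ => (e : ℂ →L[ℝ] ℝ × ℝ) := by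
      simpa [iteratedFDerivWithin_univ] using
        e.iteratedFDerivWithin_comp_right f uniqueDiffOn_univ (mem_univ (e z)) 2
    simp only [InnerProductSpace.laplacian_eq_iteratedFDeriv_complexPlane, Pi.zero_apply, hcomp]
    have := hf.2 _ hz
    rw [lap2_eq_iteratedFDeriv (hf.contDiffAt hU hz)] at this
    convert this using 2 <;> rw [ContinuousMultilinearMap.compContinuousLinearMap_apply] <;>
      congr 1 <;> ext i : 1 <;> fin_cases i <;> simp [e]
  simpa [Function.comp_def] using (HarmonicAt.analyticAt hharm).comp (e.symm.analyticAt p)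

theorem eqOn_of_eventuallyEq {V : Set (ℝ × ℝ)} (hf : HarmonicOn2 f (interior V))
    (hc : ContinuousOn f V) (hconn : IsPreconnected (interior V))
    (hV : V ⊆ closure (interior V)) {x : ℝ × ℝ} {c : ℝ} (hx : x ∈ V)
    (hfx : ∀ᶠ y in 𝓝[V] x, f y = c) : EqOn f (fun _ => c) V := by
  rw [eventually_nhdsWithin_iff, eventually_nhds_iff] at hfx
  obtain ⟨O, hOc, hO, hxO⟩ := hfx
  obtain ⟨z, hzO, hzi⟩ := mem_closure_iff.1 (hV hx) O hO hxO
  have hnhd : ∀ᶠ y in 𝓝 z, f y = c :=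
    mem_of_superset ((hO.inter isOpen_interior).mem_nhds ⟨hzO, hzi⟩)
      fun y hy => hOc y hy.1 (interior_subset hy.2)
  have hint : EqOn f (fun _ => c) (interior V) :=
    (hf.analyticOnNhd isOpen_interior).eqOn_of_preconnected_of_eventuallyEq analyticOnNhd_const
      hconn hzi hnhd
  exact hint.of_subset_closure hc continuousOn_const interior_subset hV

end HarmonicOn2

end Laplacian

section ConvexFrontier

variable {E : Type*} [NormedAddCommGroup E] [NormedSpace ℝ E] {W : Set E} {ℓ : E →L[ℝ] ℝ}
  {w a b : E}

theorem eventually_pos_and_add_smul_mem_ball (w d : E) {ρ : ℝ} (hρ : 0 < ρ) :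
    ∀ᶠ t in 𝓝[>] (0 : ℝ), 0 < t ∧ w + t • d ∈ Metric.ball w ρ := by
  have hpos : ∀ᶠ t in 𝓝[>] (0 : ℝ), 0 < t := self_mem_nhdsWithin
  refine hpos.and (tendsto_nhdsWithin_of_tendsto_nhds ?_ |>.eventually (Metric.ball_mem_nhds w hρ))
  exact Continuous.tendsto' (by fun_prop) 0 w (by simp)

theorem Convex.exists_lt_notMem_of_mem_frontier (hW : Convex ℝ W) (hw : w ∈ frontier W)
    (ha : a ∈ W) (haw : ℓ a < ℓ w) {ρ : ℝ} (hρ : 0 < ρ) :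
    ∃ z ∈ Metric.ball w ρ, ℓ w < ℓ z ∧ z ∉ W := by
  by_contra! h
  have hO : Metric.ball w ρ ∩ {z | ℓ w < ℓ z} ⊆ interior W :=
    (Metric.isOpen_ball.inter (isOpen_lt continuous_const ℓ.continuous)).subset_interior_iff.2
      fun z hz => h z hz.1 hz.2
  -- otherwise `w` lies strictly between `a` and the interior point `w + t • (w - a)`
  obtain ⟨t, htpos, ht⟩ := (eventually_pos_and_add_smul_mem_ball w (w - a) hρ).exists
  have ho : w + t • (w - a) ∈ interior W :=
    hO ⟨ht, by simpa using mul_pos htpos (sub_pos.2 haw)⟩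
  have hseg : w ∈ openSegment ℝ (w + t • (w - a)) a := by
    refine ⟨1 / (1 + t), t / (1 + t), by positivity, by positivity, by field_simp, ?_⟩
    match_scalars
    · field_simp
    · ring
  exact hw.2 (hW.openSegment_interior_closure_subset_interior ho (subset_closure ha) hseg)

theorem Convex.mem_closure_frontier_inter_lt (hW : Convex ℝ W) (hWc : IsClosed W)
    (hw : w ∈ frontier W) (ha : a ∈ W) (hb : b ∈ W) (haw : ℓ a < ℓ w)
    (hwb : ℓ w < ℓ b) :
    w ∈ closure (frontier W ∩ {p | ℓ w < ℓ p}) := by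
  rw [Metric.mem_closure_iff]
  intro ρ hρ
  obtain ⟨z, hz, hzℓ, hzW⟩ := hW.exists_lt_notMem_of_mem_frontier hw ha haw hρ
  obtain ⟨t, ⟨ht0, hty⟩, ht1⟩ :=
    ((eventually_pos_and_add_smul_mem_ball w (b - w) hρ).and (Ioo_mem_nhdsGT one_pos)).exists
  set y := w + t • (b - w)
  have hyW : y ∈ W := hW.add_smul_sub_mem (hWc.frontier_subset hw) hb ⟨ht0.le, ht1.2.le⟩
  have hyℓ : ℓ w < ℓ y := by simpa [y] using mul_pos ht0 (sub_pos.2 hwb)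
  have hseg : segment ℝ z y ⊆ Metric.ball w ρ ∩ {p | ℓ w < ℓ p} :=
    ((convex_ball w ρ).inter (convex_halfSpace_gt ℓ.isLinear _)).segment_subset ⟨hz, hzℓ⟩
      ⟨hty, hyℓ⟩
  obtain ⟨p, hp, hpW⟩ := (convex_segment z y).isPreconnected.inter_frontier_nonempty
    ⟨y, right_mem_segment ℝ z y, hyW⟩ ⟨z, left_mem_segment ℝ z y, hzW⟩
  exact ⟨p, ⟨hpW, (hseg hp).2⟩, by simpa [dist_comm] using (hseg hp).1⟩

theorem IsMaxOn.mem_frontier {p : E} (h : IsMaxOn ℓ W p) (hp : p ∈ W) (hℓ : ℓ ≠ 0) :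
    p ∈ frontier W :=
  ⟨subset_closure hp, fun hpi => hℓ <| by
    simpa using (h.isLocalMax (mem_interior_iff_mem_nhds.1 hpi)).fderiv_eq_zero⟩

end ConvexFrontier

namespace IsClosureOfSCRegion

variable {V : Set (ℝ × ℝ)}

theorem isCompact (hV : IsClosureOfSCRegion V) : IsCompact V := by
  obtain ⟨Ω, -, hb, -, -, rfl⟩ := hV
  exact hb.isCompact_closure

theorem nonempty_interior (hV : IsClosureOfSCRegion V) : (interior V).Nonempty := by
  obtain ⟨Ω, ho, -, hne, -, rfl⟩ := hV
  exact hne.mono (ho.subset_interior_iff.2 subset_closure)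

theorem subset_closure_interior (hV : IsClosureOfSCRegion V) : V ⊆ closure (interior V) := by
  obtain ⟨Ω, ho, -, -, -, rfl⟩ := hV
  exact closure_mono (ho.subset_interior_iff.2 subset_closure)

theorem isPreconnected_interior (hV : IsClosureOfSCRegion V) : IsPreconnected (interior V) := by
  obtain ⟨Ω, ho, -, -, hsc, rfl⟩ := hV
  exact (isPreconnected_iff_preconnectedSpace.2 inferInstance).subset_closure
    (ho.subset_interior_iff.2 subset_closure) interior_subset

end IsClosureOfSCRegion

theorem setOf_frontier_localMax_eq {V W : Set (ℝ × ℝ)} {F : ℝ × ℝ → ℝ × ℝ}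
    {ℓ : ℝ × ℝ →L[ℝ] ℝ} {wm wM : ℝ × ℝ} (hV : IsClosureOfSCRegion V)
    (hWc : IsClosed W) (hWconv : Convex ℝ W) (hF : ContinuousOn F V)
    (hℓF : HarmonicOn2 (fun p => ℓ (F p)) (interior V)) (hmap : MapsTo F V W)
    (hinj : InjOn F (frontier V)) (him : F '' frontier V = frontier W) (hℓ : ℓ ≠ 0)
    (hwm : wm ∈ W) (hwM : wM ∈ W) (hmin : IsMinOn ℓ W wm) (hmax : IsMaxOn ℓ W wM)
    (hmM : ℓ wm < ℓ wM) :
    {x ∈ frontier V | ∀ᶠ y in 𝓝[V] x, ℓ (F y) ≤ ℓ (F x)} =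
      frontier V ∩ F ⁻¹' {p ∈ W | ℓ p = ℓ wM} := by
  have hfrV : frontier V ⊆ V := hV.isCompact.isClosed.frontier_subset
  have hfrVc : IsCompact (frontier V) := hV.isCompact.of_isClosed_subset isClosed_frontier hfrV
  have hℓFc : ContinuousOn (fun p => ℓ (F p)) V := ℓ.continuous.comp_continuousOn hF
  have hbounds : MapsTo (fun p => ℓ (F p)) V (Icc (ℓ wm) (ℓ wM)) :=
    hℓF.mapsTo_Icc_of_mapsTo_frontier hV.isCompact hℓFc fun x hx =>
      ⟨hmin (hmap (hfrV hx)), hmax (hmap (hfrV hx))⟩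
  ext x
  refine ⟨fun ⟨hx, hxmax⟩ => ⟨hx, hmap (hfrV hx), ?_⟩, fun ⟨hx, _, hxM⟩ =>
    ⟨hx, eventually_nhdsWithin_of_forall fun y hy => hxM ▸ (hbounds hy).2⟩⟩
  by_contra hne
  obtain ⟨hmx, hxM⟩ := hbounds (hfrV hx)
  rcases hmx.lt_or_eq with hmx | hmx
  · -- boundary points with a larger value accumulate at `x`
    have hcl : x ∈ closure (frontier V ∩ F ⁻¹' (frontier W ∩ {p | ℓ (F x) < ℓ p})) :=
      hfrVc.mem_closure_inter_preimage (hF.mono hfrV) hinj (him ▸ inter_subset_left) hx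
        (hWconv.mem_closure_frontier_inter_lt hWc (him ▸ mem_image_of_mem F hx) hwm hwM hmx
          (hxM.lt_of_ne hne))
    rw [eventually_nhdsWithin_iff] at hxmax
    obtain ⟨y, ⟨hy, -, hyx⟩, hyV⟩ :=
      ((mem_closure_iff_frequently.1 hcl).and_eventually hxmax).exists
    exact (hyV (hfrV hy)).not_gt hyx
  · -- a local maximum at the minimal value forces `ℓ ∘ F` to be constant
    have hconst := hℓF.eqOn_of_eventuallyEq hℓFc hV.isPreconnected_interior
      hV.subset_closure_interior (hfrV hx) (c := ℓ wm) (by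
        filter_upwards [hxmax, self_mem_nhdsWithin] with y hyx hy
        exact le_antisymm (hmx ▸ hyx) (hbounds hy).1)
    obtain ⟨y, hy, rfl⟩ : wM ∈ F '' frontier V := him ▸ hmax.mem_frontier hwM hℓ
    exact hmM.ne' (hconst (hfrV hy))

theorem isConnected_setOf_frontier_localMax {V W : Set (ℝ × ℝ)} {F : ℝ × ℝ → ℝ × ℝ}
    {ℓ : ℝ × ℝ →L[ℝ] ℝ} (hV : IsClosureOfSCRegion V) (hW : IsClosureOfSCRegion W)
    (hWconv : Convex ℝ W) (hF : ContinuousOn F V)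
    (hℓF : HarmonicOn2 (fun p => ℓ (F p)) (interior V)) (hmap : MapsTo F V W)
    (hinj : InjOn F (frontier V)) (him : F '' frontier V = frontier W) (hℓ : ℓ ≠ 0) :
    IsConnected {x ∈ frontier V | ∀ᶠ y in 𝓝[V] x, ℓ (F y) ≤ ℓ (F x)} := by
  obtain ⟨i, hi⟩ := hW.nonempty_interior
  have hWne : W.Nonempty := ⟨i, interior_subset hi⟩
  obtain ⟨wM, hwM, hmax⟩ := hW.isCompact.exists_isMaxOn hWne ℓ.continuous.continuousOn
  obtain ⟨wm, hwm, hmin⟩ := hW.isCompact.exists_isMinOn hWne ℓ.continuous.continuousOn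
  have hmM : ℓ wm < ℓ wM := by
    by_contra! h
    have hi_max : IsMaxOn ℓ W i := fun q hq =>
      (hmax hq).trans (h.trans (hmin (interior_subset hi)))
    exact (hi_max.mem_frontier (interior_subset hi) hℓ).2 hi
  rw [setOf_frontier_localMax_eq hV hW.isCompact.isClosed hWconv hF hℓF hmap hinj him hℓ hwm hwM
    hmin hmax hmM]
  have hface : {p ∈ W | ℓ p = ℓ wM} ⊆ F '' frontier V := fun p hp =>
    him ▸ IsMaxOn.mem_frontier (fun q hq => hp.2 ▸ hmax hq) hp.1 hℓ
  obtain ⟨y, hy, rfl⟩ := hface ⟨hwM, rfl⟩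
  have hfrV : frontier V ⊆ V := hV.isCompact.isClosed.frontier_subset
  exact ⟨⟨y, hy, hwM, rfl⟩, (hV.isCompact.of_isClosed_subset isClosed_frontier hfrV)
    |>.isPreconnected_inter_preimage (hF.mono hfrV) hinj
      (hWconv.inter (convex_hyperplane ℓ.isLinear _)).isPreconnected hface⟩

/-- With `F = (u, v) : V → W` as above (`u, v` continuous on `V`, harmonic
on its interior, `F(V) ⊆ W`, `W` convex, and `F|∂V` a homeomorphism onto `∂W`), for every
`α ∈ [0, π)` the sets of local-maximum and local-minimum boundary points of
`f_α = cos(α)·u + sin(α)·v` (with neighborhoods taken in `V`) are nonempty and connected. -/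
theorem falpha_unique_max_min (V W : Set (ℝ × ℝ))
    (hV : IsClosureOfSCRegion V) (hW : IsClosureOfSCRegion W) (hWconv : Convex ℝ W)
    (u v : ℝ × ℝ → ℝ)
    (hu : ContinuousOn u V) (hv : ContinuousOn v V)
    (huh : HarmonicOn2 u (interior V)) (hvh : HarmonicOn2 v (interior V))
    (hmap : ∀ x ∈ V, (u x, v x) ∈ W)
    (hinj : Set.InjOn (fun p => (u p, v p)) (frontier V))
    (him : (fun p => (u p, v p)) '' frontier V = frontier W) :
    ∀ α ∈ Ico (0 : ℝ) Real.pi,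
      IsConnected {x ∈ frontier V | ∀ᶠ y in 𝓝[V] x,
        Real.cos α * u y + Real.sin α * v y ≤ Real.cos α * u x + Real.sin α * v x} ∧
      IsConnected {x ∈ frontier V | ∀ᶠ y in 𝓝[V] x,
        Real.cos α * u x + Real.sin α * v x ≤ Real.cos α * u y + Real.sin α * v y} := by
  intro α _
  set ℓ : ℝ × ℝ →L[ℝ] ℝ :=
    Real.cos α • ContinuousLinearMap.fst ℝ ℝ ℝ +
      Real.sin α • ContinuousLinearMap.snd ℝ ℝ ℝ
  have hℓ : ℓ ≠ 0 := fun h => by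
    have h₁ := congrArg (fun l => l (1, 0)) h
    have h₂ := congrArg (fun l => l (0, 1)) h
    simp [ℓ] at h₁ h₂
    nlinarith [Real.sin_sq_add_cos_sq α]
  have key : ∀ ℓ' : ℝ × ℝ →L[ℝ] ℝ, ℓ' ≠ 0 →
      IsConnected {x ∈ frontier V | ∀ᶠ y in 𝓝[V] x, ℓ' (u y, v y) ≤ ℓ' (u x, v x)} :=
    fun ℓ' hℓ' => isConnected_setOf_frontier_localMax hV hW hWconv (hu.prodMk hv)
      (huh.clm_comp_prodMk hvh isOpen_interior ℓ') hmap hinj him hℓ'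
  have hmin := key (-ℓ) (neg_ne_zero.2 hℓ)
  simp only [neg_apply, neg_le_neg_iff] at hmin
  exact ⟨by simpa [ℓ] using key ℓ hℓ, by simpa [ℓ] using hmin⟩
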